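/- The finite quadratic form (A,q) = u(2)^2 ⊕ ⟨−1/4⟩ (the discriminant form of the lattice T = U(2)^2 ⊕ ⟨−4⟩) has exactly 10 cyclic subgroups of order 4 generated by an element x with q(x) = −1/4, exactly 6 cyclic subgroups of order 4 generated by an element x with q(x) = 3/4, and exactly 15 subgroups isomorphic to Z/2 × Z/2 containing the element 2g (where g generates the ⟨−1/4⟩ summand); in total 31 such subgroups. -/

import Mathlib

/-- Underlying group of the finite quadratic form `A = u(2)^2 ⊕ ⟨-1/4⟩`,
the discriminant form of `T = U(2)^2 ⊕ ⟨-4⟩`. -/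
abbrev AT : Type := (Fin 2 → ZMod 2 × ZMod 2) × ZMod 4

/-- The quadratic form `u(2)^2 ⊕ ⟨-1/4⟩` with values in `ℚ/2ℤ`:
`q(e)=q(f)=0`, `b(e,f)=1/2` on each `u(2)`, and `q(g) = -1/4` on the `ℤ/4` summand. -/
def qT (x : AT) : AddCircle (2 : ℚ) :=
  (((∑ i, ((x.1 i).1.val : ℚ) * ((x.1 i).2.val : ℚ)) - ((x.2.val : ℚ))^2 / 4 : ℚ) :
    AddCircle (2 : ℚ))

/-- The element `2g`, where `g` generates the `⟨-1/4⟩` summand. -/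
def twoG : AT := (0, 2)

/-!
An element of order 4 of `A` has `ℤ/4`-component `±1`, and `q(-x) = q(x)`, so each cyclic
subgroup of order 4 has exactly one generator of the form `(v, 1)` with `v ∈ u(2)^2`. For such
an element `q(v, 1) = q_u(v) - 1/4`, where `q_u(v) = a₁b₁ + a₂b₂ ∈ ℤ/2` is the hyperbolic form
on `𝔽₂⁴`, which has 10 zeros and 6 non-zeros.

A Klein four subgroup lies in the 2-torsion `u(2)^2 × ⟨2g⟩`; if it contains `2g` it is
`⟨v⟩ × ⟨2g⟩` for exactly one `v ≠ 0` in `u(2)^2`, which gives 15 of them.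
-/

section CyclicSubgroups

variable {G : Type*} [AddCommGroup G] {n : ℕ} (f : G →+ ZMod n)

theorem AddMonoidHom.eq_of_mem_zmultiples_of_map_eq_one {x y : G} (hx : n • x = 0)
    (hy : y ∈ AddSubgroup.zmultiples x) (hfx : f x = 1) (hfy : f y = 1) : y = x := by
  obtain ⟨k, rfl⟩ := AddSubgroup.mem_zmultiples_iff.mp hy
  have hk : ((k : ℤ) : ZMod n) = ((1 : ℤ) : ZMod n) := by
    simpa [map_zsmul, hfx] using hfy
  obtain ⟨m, hm⟩ := (ZMod.intCast_eq_intCast_iff_dvd_sub _ _ _).mp hk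
  rw [show k = 1 - m * n by linarith, sub_zsmul, one_zsmul, mul_zsmul, natCast_zsmul, hx,
    zsmul_zero, neg_zero, add_zero]

theorem AddMonoidHom.addOrderOf_eq_of_map_eq_one {x : G} (hx : n • x = 0) (hfx : f x = 1) :
    addOrderOf x = n := by
  refine Nat.dvd_antisymm (addOrderOf_dvd_of_nsmul_eq_zero hx) ?_
  have h := congrArg f (addOrderOf_nsmul_eq_zero x)
  rw [map_nsmul, hfx, nsmul_one, map_zero] at h
  exact (ZMod.natCast_eq_zero_iff _ _).mp h

/-- The generator of `⟨x⟩` counted on the right is whichever of `x`, `-x` is sent to `1`. -/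
theorem AddMonoidHom.card_cyclic_subgroups_eq (P : G → Prop) (hexp : ∀ x : G, n • x = 0)
    (hgen : ∀ x : G, addOrderOf x = n → f x = 1 ∨ f x = -1) (hP : ∀ x, P x → P (-x)) :
    Nat.card {H : AddSubgroup G // ∃ x, H = AddSubgroup.closure {x} ∧ addOrderOf x = n ∧ P x} =
      Nat.card {x : G // f x = 1 ∧ P x} := by
  refine (Nat.card_eq_of_bijective (fun x => ⟨AddSubgroup.closure {x.1}, x.1, rfl,
    f.addOrderOf_eq_of_map_eq_one (hexp _) x.2.1, x.2.2⟩) ⟨?_, ?_⟩).symm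
  · rintro ⟨x, hfx, _⟩ ⟨y, hfy, _⟩ hxy
    have hy : y ∈ AddSubgroup.zmultiples x := by
      have hc : AddSubgroup.closure {x} = AddSubgroup.closure {y} := congrArg Subtype.val hxy
      rw [AddSubgroup.zmultiples_eq_closure, hc]
      exact AddSubgroup.mem_closure_singleton_self y
    exact Subtype.ext (f.eq_of_mem_zmultiples_of_map_eq_one (hexp x) hy hfx hfy).symm
  · rintro ⟨H, x, rfl, hx, hPx⟩
    rcases hgen x hx with h | h
    · exact ⟨⟨x, h, hPx⟩, rfl⟩
    · refine ⟨⟨-x, by rw [map_neg, h, neg_neg], hP x hPx⟩, ?_⟩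
      simp only [← AddSubgroup.zmultiples_eq_closure, AddSubgroup.zmultiples_neg]

end CyclicSubgroups

theorem eq_of_mem_zmultiples_of_addOrderOf_eq_two {G : Type*} [AddGroup G] {v w : G}
    (hw : addOrderOf w = 2) (hv : v ∈ AddSubgroup.zmultiples w) (hv0 : v ≠ 0) : v = w := by
  obtain ⟨k, rfl⟩ := AddSubgroup.mem_zmultiples_iff.mp hv
  rw [← mod_addOrderOf_zsmul, hw] at hv0 ⊢
  rcases Int.emod_two_eq_zero_or_one k with h | h <;> simp_all

theorem card_subtype_snd_eq_and {α β : Type*} (b : β) (P : α × β → Prop) :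
    Nat.card {x : α × β // x.2 = b ∧ P x} = Nat.card {a : α // P (a, b)} :=
  Nat.card_congr
    { toFun := fun x => ⟨x.1.1, by obtain ⟨⟨a, _⟩, rfl, h⟩ := x; exact h⟩
      invFun := fun a => ⟨(a.1, b), rfl, a.2⟩
      left_inv := by rintro ⟨⟨a, _⟩, rfl, _⟩; rfl
      right_inv := fun _ => rfl }

namespace AT

abbrev V : Type := Fin 2 → ZMod 2 × ZMod 2

theorem four_nsmul_eq_zero : ∀ x : AT, 4 • x = 0 := by decide

theorem snd_eq_one_or_neg_one_of_addOrderOf_eq_four (x : AT) (hx : addOrderOf x = 4) :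
    x.2 = 1 ∨ x.2 = -1 := by
  have h : ∀ x : AT, 2 • x = 0 ∨ x.2 = 1 ∨ x.2 = -1 := by decide
  refine (h x).resolve_left fun h2 => ?_
  have := addOrderOf_dvd_of_nsmul_eq_zero h2
  rw [hx] at this
  norm_num at this

theorem snd_eq_zero_or_two {a : AT} (ha : 2 • a = 0) : a.2 = 0 ∨ a.2 = 2 :=
  (by decide : ∀ c : ZMod 4, 2 • c = 0 → c = 0 ∨ c = 2) _ (congrArg Prod.snd ha)

theorem V.two_nsmul_eq_zero : ∀ v : V, 2 • v = 0 := by decide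

theorem V.addOrderOf_eq_two {v : V} (hv : v ≠ 0) : addOrderOf v = 2 :=
  addOrderOf_eq_prime (V.two_nsmul_eq_zero v) hv

theorem coe_div_four_eq_coe_div_four_iff (a b : ℤ) :
    ((a / 4 : ℚ) : AddCircle (2 : ℚ)) = ((b / 4 : ℚ) : AddCircle (2 : ℚ)) ↔ a ≡ b [ZMOD 8] := by
  rw [← AddCommGroup.modEq_iff_eq_mod_zmultiples, AddCommGroup.div_modEq_div (by norm_num),
    show (2 * 4 : ℚ) = ((8 : ℤ) : ℚ) by norm_num, AddCommGroup.intCast_modEq_intCast,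
    AddCommGroup.modEq_iff_intModEq]

/-- `4 q` lifts to `ℤ`, so `q` can be computed in `ℤ/8`. -/
def qInt (x : AT) : ℤ := 4 * ∑ i, ((x.1 i).1.val * (x.1 i).2.val : ℤ) - (x.2.val : ℤ) ^ 2

theorem qT_eq_coe_qInt_div_four (x : AT) : qT x = ((qInt x / 4 : ℚ) : AddCircle (2 : ℚ)) := by
  rw [qT, qInt]
  push_cast
  ring_nf

theorem qT_neg (x : AT) : qT (-x) = qT x := by
  rw [qT_eq_coe_qInt_div_four, qT_eq_coe_qInt_div_four, coe_div_four_eq_coe_div_four_iff]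
  obtain ⟨v, c⟩ := x
  have hv : ∀ v : V, -v = v := by decide
  have hc : ∀ c : ZMod 4, ((-c).val : ℤ) ^ 2 ≡ (c.val : ℤ) ^ 2 [ZMOD 8] := by decide
  simp only [qInt, Prod.neg_mk, hv v]
  exact (hc c).sub_left _

/-- `q` on `u(2)^2`, whose values lie in `ℤ/2ℤ ⊂ ℚ/2ℤ`. -/
def qU (v : V) : ZMod 2 := ∑ i, (v i).1 * (v i).2

theorem qT_mk_one_eq_iff (v : V) (m : ℤ) :
    qT (v, 1) = ((m - 1 / 4 : ℚ) : AddCircle (2 : ℚ)) ↔ qU v = m := by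
  have hm : (m - 1 / 4 : ℚ) = ((4 * m - 1 : ℤ) : ℚ) / 4 := by push_cast; ring
  have hqU : qU v = ((∑ i, ((v i).1.val * (v i).2.val : ℤ) : ℤ) : ZMod 2) := by
    simp [qU]
  have h1 : ((1 : ZMod 4).val : ℤ) = 1 := rfl
  rw [qT_eq_coe_qInt_div_four, hm, coe_div_four_eq_coe_div_four_iff, hqU,
    ZMod.intCast_eq_intCast_iff]
  simp only [qInt, Int.ModEq, h1]
  omega

theorem card_cyclic_subgroups_qT_eq (m : ℤ) :
    Nat.card {H : AddSubgroup AT // ∃ x : AT, H = AddSubgroup.closure {x} ∧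
      addOrderOf x = 4 ∧ qT x = ((m - 1 / 4 : ℚ) : AddCircle (2 : ℚ))} =
      Nat.card {v : V // qU v = m} := by
  rw [(AddMonoidHom.snd V (ZMod 4)).card_cyclic_subgroups_eq _ four_nsmul_eq_zero
    snd_eq_one_or_neg_one_of_addOrderOf_eq_four fun x hx => (qT_neg x).trans hx]
  simp only [AddMonoidHom.coe_snd]
  rw [card_subtype_snd_eq_and]
  simp only [qT_mk_one_eq_iff]

theorem card_qU_eq_zero : Nat.card {v : V // qU v = 0} = 10 := by
  rw [Nat.card_eq_fintype_card]; decide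

theorem card_qU_eq_one : Nat.card {v : V // qU v = 1} = 6 := by
  rw [Nat.card_eq_fintype_card]; decide

def klein (v : V) : AddSubgroup AT :=
  (AddSubgroup.zmultiples v).prod (AddSubgroup.zmultiples 2)

theorem card_klein (v : V) : Nat.card (klein v) = addOrderOf v * 2 := by
  rw [klein, Nat.card_congr (AddSubgroup.prodEquiv _ _).toEquiv, Nat.card_prod,
    Nat.card_zmultiples, Nat.card_zmultiples,
    addOrderOf_eq_prime (p := 2) (x := (2 : ZMod 4)) rfl (by decide)]

theorem klein_le_iff {v : V} {H : AddSubgroup AT} : klein v ≤ H ↔ (v, 0) ∈ H ∧ twoG ∈ H := by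
  simp only [klein, AddSubgroup.prod_le_iff, AddMonoidHom.map_zmultiples,
    AddSubgroup.zmultiples_le]
  rfl

theorem klein_addEquiv {v : V} (hv : v ≠ 0) : Nonempty (klein v ≃+ ZMod 2 × ZMod 2) := by
  have h2 : ∀ {A : Type} [AddGroup A] {a : A}, 2 • a = 0 → a ≠ 0 →
      Nat.card (AddSubgroup.zmultiples a) = Nat.card (ZMod 2) := fun h h' => by
    rw [Nat.card_zmultiples, addOrderOf_eq_prime h h', Nat.card_zmod]
  exact ⟨(AddSubgroup.prodEquiv _ _).trans (AddEquiv.prodCongr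
    (addEquivOfAddCyclicCardEq (h2 (V.two_nsmul_eq_zero v) hv))
    (addEquivOfAddCyclicCardEq (h2 (a := (2 : ZMod 4)) rfl (by decide))))⟩

theorem mem_klein_fst {a : AT} (ha : 2 • a = 0) : a ∈ klein a.1 := by
  refine AddSubgroup.mem_prod.mpr ⟨AddSubgroup.mem_zmultiples _, ?_⟩
  rcases snd_eq_zero_or_two ha with h | h <;> rw [h]
  exacts [zero_mem _, AddSubgroup.mem_zmultiples _]

theorem exists_klein_eq {H : AddSubgroup AT} (e : H ≃+ ZMod 2 × ZMod 2) (ht : twoG ∈ H) :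
    ∃ v ≠ 0, klein v = H := by
  have hcard : Nat.card H = 4 := by
    rw [Nat.card_congr e.toEquiv, Nat.card_prod, Nat.card_zmod]
  have htors : ∀ a ∈ H, 2 • a = 0 := fun a ha => by
    have h : 2 • (⟨a, ha⟩ : H) = 0 := e.injective <| by
      rw [map_nsmul, map_zero]
      exact (by decide : ∀ z : ZMod 2 × ZMod 2, 2 • z = 0) _
    simpa using congrArg Subtype.val h
  obtain ⟨a, ha, ha0⟩ : ∃ a ∈ H, a.1 ≠ 0 := by
    by_contra! h
    have hle : H ≤ klein 0 := fun a ha => h a ha ▸ mem_klein_fst (htors a ha)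
    have := AddSubgroup.card_le_of_le hle
    rw [card_klein, addOrderOf_zero, hcard] at this
    omega
  have ha' : ((a.1, 0) : AT) ∈ H := by
    rcases snd_eq_zero_or_two (htors a ha) with h | h
    · rwa [← h]
    · have hsum : a + twoG = (a.1, 0) := Prod.ext (add_zero _) (by rw [Prod.snd_add, h]; rfl)
      exact hsum ▸ add_mem ha ht
  refine ⟨a.1, ha0, AddSubgroup.eq_of_le_of_card_ge (klein_le_iff.mpr ⟨ha', ht⟩) ?_⟩
  rw [hcard, card_klein, V.addOrderOf_eq_two ha0]

theorem card_klein_subgroups :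
    Nat.card {H : AddSubgroup AT // Nonempty (H ≃+ (ZMod 2 × ZMod 2)) ∧ twoG ∈ H} = 15 := by
  have h15 : Nat.card {v : V // v ≠ 0} = 15 := by
    rw [Nat.card_eq_fintype_card]; decide
  rw [← h15]
  refine (Nat.card_eq_of_bijective (fun v => ⟨klein v.1, klein_addEquiv v.2,
    (klein_le_iff.mp le_rfl).2⟩) ⟨?_, ?_⟩).symm
  · rintro ⟨v, hv⟩ ⟨w, hw⟩ h
    have hvw : ((v, 0) : AT) ∈ klein w := by
      have hkl : klein v = klein w := congrArg Subtype.val h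
      exact hkl ▸ (klein_le_iff.mp le_rfl).1
    exact Subtype.ext <| eq_of_mem_zmultiples_of_addOrderOf_eq_two (V.addOrderOf_eq_two hw)
      (AddSubgroup.mem_prod.mp hvw).1 hv
  · rintro ⟨H, ⟨e⟩, ht⟩
    obtain ⟨v, hv, rfl⟩ := exists_klein_eq e ht
    exact ⟨⟨v, hv⟩, rfl⟩

end AT

/-- `A = u(2)^2 ⊕ ⟨-1/4⟩` has exactly 10 cyclic subgroups of order 4
generated by an `x` with `q(x) = -1/4`, exactly 6 cyclic subgroups of order 4
generated by an `x` with `q(x) = 3/4`, and exactly 15 subgroups isomorphic to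
`ℤ/2 × ℤ/2` containing `2g`; in total `10 + 6 + 15 = 31`. -/
theorem count_subgroups_of_discriminant_form :
    Nat.card {H : AddSubgroup AT // ∃ x : AT, H = AddSubgroup.closure {x} ∧
      addOrderOf x = 4 ∧ qT x = ((-1/4 : ℚ) : AddCircle (2 : ℚ))} = 10 ∧
    Nat.card {H : AddSubgroup AT // ∃ x : AT, H = AddSubgroup.closure {x} ∧
      addOrderOf x = 4 ∧ qT x = ((3/4 : ℚ) : AddCircle (2 : ℚ))} = 6 ∧
    Nat.card {H : AddSubgroup AT // Nonempty (H ≃+ (ZMod 2 × ZMod 2)) ∧ twoG ∈ H} = 15 ∧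
    10 + 6 + 15 = 31 := by
  refine ⟨?_, ?_, AT.card_klein_subgroups, rfl⟩
  · rw [show (-1 / 4 : ℚ) = ((0 : ℤ) : ℚ) - 1 / 4 by norm_num, AT.card_cyclic_subgroups_qT_eq,
      Int.cast_zero, AT.card_qU_eq_zero]
  · rw [show (3 / 4 : ℚ) = ((1 : ℤ) : ℚ) - 1 / 4 by norm_num, AT.card_cyclic_subgroups_qT_eq,
      Int.cast_one, AT.card_qU_eq_one]
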